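/- Let F be a non-degenerate cdf on ℝ with finite first absolute moment, c > 0 and δ > 0. If G(x+δ) − G(y+δ) = c·∫_x^y G(t) dt for all x, y ∈ T, then H(x) = 0 for all x ∈ T. -/

import Mathlib

open MeasureTheory Set
open scoped ENNReal NNReal

/-- Survival function `G(x) = 1 - F(x) = μ(x, ∞)` of the distribution `μ`. -/
noncomputable def survG (μ : Measure ℝ) (x : ℝ) : ℝ := (μ (Set.Ioi x)).toReal

/-- `H(x) = G(x+δ) - c ∫_x^∞ G(t) dt`. -/
noncomputable def funH (μ : Measure ℝ) (c δ x : ℝ) : ℝ :=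
  survG μ (x + δ) - c * ∫ t in Set.Ioi x, survG μ t

/-- The support of the distribution: points every neighbourhood of which has positive mass. -/
def suppF (μ : Measure ℝ) : Set ℝ :=
  {x | ∀ ε > 0, 0 < μ (Set.Ioo (x - ε) (x + ε))}

/-- The set `R` of continuity points `x` of `F` in the support such that `x + δ` is an atom. -/
def Rset (μ : Measure ℝ) (δ : ℝ) : Set ℝ :=
  {x ∈ suppF μ | μ {x} = 0 ∧ 0 < μ {x + δ}}

/-- `T = supp(F) \ R`. -/
def Tset (μ : Measure ℝ) (δ : ℝ) : Set ℝ := suppF μ \ Rset μ δ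

section Aux

variable (μ : Measure ℝ) [IsProbabilityMeasure μ]

lemma survG_nonneg (x : ℝ) : 0 ≤ survG μ x := ENNReal.toReal_nonneg

lemma survG_antitone : Antitone (survG μ) := fun x y hxy =>
  ENNReal.toReal_mono (measure_ne_top μ _) (measure_mono (Ioi_subset_Ioi hxy))

lemma survG_measurable : Measurable (survG μ) := (survG_antitone μ).measurable

lemma lintegral_survG_lt_top (hint : Integrable (fun x : ℝ => x) μ) :
    ∫⁻ t in Set.Ioi (0:ℝ), μ (Set.Ioi t) < ⊤ := by
  have hf : AEMeasurable (fun ω : ℝ => max ω 0) μ :=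
    (measurable_id.max measurable_const).aemeasurable
  have hlc := lintegral_eq_lintegral_meas_lt μ (f := fun ω : ℝ => max ω 0)
    (Filter.Eventually.of_forall fun ω => le_max_right _ _) hf
  have heq : ∫⁻ t in Set.Ioi (0:ℝ), μ {a : ℝ | t < max a 0}
      = ∫⁻ t in Set.Ioi (0:ℝ), μ (Set.Ioi t) := by
    refine setLIntegral_congr_fun measurableSet_Ioi ?_
    intro t ht
    show μ {a : ℝ | t < max a 0} = μ (Set.Ioi t)
    congr 1
    ext a
    simp only [mem_setOf_eq, mem_Ioi, lt_max_iff]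
    exact ⟨fun h => h.resolve_right (by simpa using not_lt.2 (mem_Ioi.1 ht).le), Or.inl⟩
  have hfin : ∫⁻ ω, ENNReal.ofReal (max ω 0) ∂μ < ⊤ := by
    refine lt_of_le_of_lt ?_ hint.hasFiniteIntegral
    refine lintegral_mono fun ω => ?_
    rw [Real.enorm_eq_ofReal_abs]
    exact ENNReal.ofReal_le_ofReal (max_le (le_abs_self _) (abs_nonneg _))
  rw [hlc, heq] at hfin
  exact hfin

lemma survG_integrableOn (hint : Integrable (fun x : ℝ => x) μ) (a : ℝ) :
    IntegrableOn (survG μ) (Set.Ioi a) := by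
  have h0 : IntegrableOn (survG μ) (Set.Ioi (0:ℝ)) := by
    refine ⟨(survG_measurable μ).aestronglyMeasurable.restrict, ?_⟩
    rw [HasFiniteIntegral]
    have : ∀ t : ℝ, ‖survG μ t‖ₑ = μ (Set.Ioi t) := by
      intro t
      rw [Real.enorm_eq_ofReal (survG_nonneg μ t), survG,
        ENNReal.ofReal_toReal (measure_ne_top μ _)]
    calc ∫⁻ t in Set.Ioi (0:ℝ), ‖survG μ t‖ₑ
        = ∫⁻ t in Set.Ioi (0:ℝ), μ (Set.Ioi t) := by
          exact lintegral_congr fun t => this t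
      _ < ⊤ := lintegral_survG_lt_top μ hint
  have h1 : IntegrableOn (survG μ) (Set.Ioc a 0) := by
    refine Measure.integrableOn_of_bounded (M := 1) ?_
      (survG_measurable μ).aestronglyMeasurable ?_
    · exact ((measure_mono Ioc_subset_Icc_self).trans_lt measure_Icc_lt_top).ne
    · refine Filter.Eventually.of_forall fun t => ?_
      rw [Real.norm_eq_abs, abs_of_nonneg (survG_nonneg μ t)]
      exact ENNReal.toReal_le_of_le_ofReal zero_le_one (by simpa using prob_le_one)
  refine (h1.union h0).mono_set ?_
  intro t ht
  rcases le_or_gt t 0 with h | h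
  · exact Or.inl ⟨ht, h⟩
  · exact Or.inr h

lemma integral_Ioi_split (hint : Integrable (fun x : ℝ => x) μ) {x y : ℝ} (hxy : x ≤ y) :
    ∫ t in Set.Ioi x, survG μ t = (∫ t in x..y, survG μ t) + ∫ t in Set.Ioi y, survG μ t := by
  rw [intervalIntegral.integral_of_le hxy]
  rw [← setIntegral_union (Ioc_disjoint_Ioi le_rfl) measurableSet_Ioi
    ((survG_integrableOn μ hint x).mono_set Ioc_subset_Ioi_self)
    (survG_integrableOn μ hint y), Ioc_union_Ioi_eq_Ioi hxy]

lemma suppF_compl_null : μ (suppF μ)ᶜ = 0 := by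
  refine measure_null_of_locally_null _ fun x hx => ?_
  simp only [suppF, mem_compl_iff, mem_setOf_eq, not_forall, not_lt] at hx
  obtain ⟨ε, hε, hμε⟩ := hx
  refine ⟨Set.Ioo (x - ε) (x + ε), ?_, le_antisymm hμε zero_le⟩
  exact nhdsWithin_le_nhds (isOpen_Ioo.mem_nhds ⟨by linarith, by linarith⟩)

lemma Rset_null (δ : ℝ) : μ (Rset μ δ) = 0 := by
  have hc : (Rset μ δ).Countable := by
    have hatoms : Set.Countable {y : ℝ | 0 < μ {y}} := by
      refine Measure.countable_meas_pos_of_disjoint_iUnion₀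
        (As := fun y : ℝ => {y}) (fun y => (measurableSet_singleton y).nullMeasurableSet) ?_
      intro i j hij
      exact Disjoint.aedisjoint (by simpa using hij)
    have : Rset μ δ ⊆ (fun y => y - δ) '' {y : ℝ | 0 < μ {y}} := by
      rintro x ⟨-, -, hx⟩
      exact ⟨x + δ, hx, by ring⟩
    exact (hatoms.image _).mono this
  have : Rset μ δ = ⋃ x ∈ Rset μ δ, {x} := (biUnion_of_singleton _).symm
  rw [this, measure_biUnion_null_iff hc]
  rintro x ⟨-, hx, -⟩
  exact hx

lemma exists_Tset_gt (δ : ℝ) {M : ℝ} (hM : μ (Set.Ioi M) ≠ 0) :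
    ∃ y ∈ Tset μ δ, M < y := by
  have hsub : Set.Ioi M ⊆ (Tset μ δ ∩ Set.Ioi M) ∪ ((suppF μ)ᶜ ∪ Rset μ δ) := by
    intro y hy
    by_cases h1 : y ∈ suppF μ
    · by_cases h2 : y ∈ Rset μ δ
      · exact Or.inr (Or.inr h2)
      · exact Or.inl ⟨⟨h1, h2⟩, hy⟩
    · exact Or.inr (Or.inl h1)
  have hnull : μ ((suppF μ)ᶜ ∪ Rset μ δ) = 0 :=
    measure_union_null (suppF_compl_null μ) (Rset_null μ δ)
  have hpos : μ (Tset μ δ ∩ Set.Ioi M) ≠ 0 := by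
    intro h0
    exact hM (measure_mono_null hsub (measure_union_null h0 hnull))
  obtain ⟨y, hyT, hyM⟩ := nonempty_of_measure_ne_zero hpos
  exact ⟨y, hyT, hyM⟩

lemma funH_eq_of_mem (hint : Integrable (fun x : ℝ => x) μ) {c δ : ℝ}
    (hd : ∀ x ∈ Tset μ δ, ∀ y ∈ Tset μ δ,
      survG μ (x + δ) - survG μ (y + δ) = c * ∫ t in x..y, survG μ t)
    {x y : ℝ} (hx : x ∈ Tset μ δ) (hy : y ∈ Tset μ δ) (hxy : x ≤ y) :
    funH μ c δ x = funH μ c δ y := by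
  have h1 := hd x hx y hy
  have h2 := integral_Ioi_split μ hint hxy
  simp only [funH]
  rw [h2, mul_add]
  linarith [h1]

lemma tendsto_funH_atTop (hint : Integrable (fun x : ℝ => x) μ) (c δ : ℝ) :
    Filter.Tendsto (funH μ c δ) Filter.atTop (nhds 0) := by
  have hmeas : Filter.Tendsto (fun y => μ (Set.Ioi y)) Filter.atTop (nhds 0) := by
    have h := tendsto_measure_iInter_atTop (μ := μ) (s := fun y : ℝ => Set.Ioi y)
      (fun y => measurableSet_Ioi.nullMeasurableSet)
      (fun i j hij => Ioi_subset_Ioi hij) ⟨0, measure_ne_top μ _⟩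
    have hempty : ⋂ y : ℝ, Set.Ioi y = ∅ := by
      ext t
      simp only [mem_iInter, mem_Ioi, mem_empty_iff_false, iff_false, not_forall, not_lt]
      exact ⟨t, le_rfl⟩
    rw [hempty, measure_empty] at h
    exact h
  have hG : Filter.Tendsto (survG μ) Filter.atTop (nhds 0) := by
    have := (ENNReal.tendsto_toReal (by simp : (0:ℝ≥0∞) ≠ ⊤)).comp hmeas
    rw [ENNReal.toReal_zero] at this
    exact this
  have hA : Filter.Tendsto (fun y => survG μ (y + δ)) Filter.atTop (nhds 0) :=
    hG.comp (Filter.tendsto_atTop_add_const_right _ δ Filter.tendsto_id)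
  have hB : Filter.Tendsto (fun y => ∫ t in Set.Ioi y, survG μ t) Filter.atTop (nhds 0) := by
    have hC := intervalIntegral_tendsto_integral_Ioi 0 (survG_integrableOn μ hint 0)
      Filter.tendsto_id
    have hD : Filter.Tendsto
        (fun y => (∫ t in Set.Ioi (0:ℝ), survG μ t) - ∫ t in (0:ℝ)..y, survG μ t)
        Filter.atTop (nhds 0) := by
      have := (tendsto_const_nhds (x := ∫ t in Set.Ioi (0:ℝ), survG μ t)
        (f := Filter.atTop (α := ℝ))).sub hC
      simpa using this
    refine hD.congr' ?_
    filter_upwards [Filter.eventually_ge_atTop (0:ℝ)] with y hy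
    have := integral_Ioi_split μ hint hy
    linarith
  have := hA.sub (hB.const_mul c)
  rw [mul_zero, sub_zero] at this
  exact this

end Aux

/-- For `δ > 0`: if `G(x+δ) - G(y+δ) = c ∫_x^y G(t) dt` for all `x, y ∈ T`,
then `H(x) = 0` for all `x ∈ T`. -/
theorem stmt2 (μ : Measure ℝ) [IsProbabilityMeasure μ]
    (hnd : ∀ x : ℝ, μ {x} ≠ 1)
    (hint : Integrable (fun x : ℝ => x) μ)
    (c δ : ℝ) (hc : 0 < c) (hδ : 0 < δ)
    (hd : ∀ x ∈ Tset μ δ, ∀ y ∈ Tset μ δ,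
      survG μ (x + δ) - survG μ (y + δ) = c * ∫ t in x..y, survG μ t) :
    ∀ x ∈ Tset μ δ, funH μ c δ x = 0 := by
  intro x hx
  by_cases hbdd : ∃ M : ℝ, μ (Set.Ioi M) = 0
  · -- bounded support case
    obtain ⟨M, hM⟩ := hbdd
    have hsuppM : suppF μ ⊆ Set.Iic M := by
      intro a ha
      by_contra hcon
      simp only [mem_Iic, not_le] at hcon
      have h1 : 0 < μ (Set.Ioo (a - (a - M)) (a + (a - M))) := ha _ (by linarith)
      have h2 : Set.Ioo (a - (a - M)) (a + (a - M)) ⊆ Set.Ioi M := by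
        intro t ht
        simp only [mem_Ioo] at ht
        simp only [mem_Ioi]
        linarith [ht.1]
      exact absurd (measure_mono_null h2 hM) h1.ne'
    have hne : (suppF μ).Nonempty := by
      by_contra hcon
      rw [not_nonempty_iff_eq_empty] at hcon
      have : μ (suppF μ)ᶜ = 0 := suppF_compl_null μ
      rw [hcon, compl_empty] at this
      simp [measure_univ] at this
    have hbdd' : BddAbove (suppF μ) := ⟨M, hsuppM⟩
    set b := sSup (suppF μ) with hb
    have hIoib : μ (Set.Ioi b) = 0 := by
      refine measure_mono_null ?_ (suppF_compl_null μ)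
      intro t ht
      simp only [mem_compl_iff]
      intro hts
      exact absurd (le_csSup hbdd' hts) (not_le.2 ht)
    have hbsupp : b ∈ suppF μ := by
      intro ε hε
      obtain ⟨a, ha, hab⟩ := exists_lt_of_lt_csSup hne (show b - ε/2 < b by linarith)
      have h1 : 0 < μ (Set.Ioo (a - ε/2) (a + ε/2)) := ha _ (by linarith)
      refine lt_of_lt_of_le h1 (measure_mono ?_)
      have hab' : a ≤ b := le_csSup hbdd' ha
      intro t ht
      simp only [mem_Ioo] at ht ⊢
      constructor <;> linarith [ht.1, ht.2]
    have hbT : b ∈ Tset μ δ := by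
      refine ⟨hbsupp, ?_⟩
      rintro ⟨-, -, hatom⟩
      have : μ {b + δ} = 0 :=
        measure_mono_null (by simp [mem_Ioi]; linarith) hIoib
      rw [this] at hatom
      exact lt_irrefl _ hatom
    have hHb : funH μ c δ b = 0 := by
      have h1 : survG μ (b + δ) = 0 := by
        rw [survG]
        rw [measure_mono_null (Ioi_subset_Ioi (by linarith)) hIoib]
        simp
      have h2 : ∫ t in Set.Ioi b, survG μ t = 0 := by
        rw [setIntegral_congr_fun measurableSet_Ioi
          (g := fun _ => (0:ℝ)) ?_, integral_zero]
        intro t ht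
        rw [survG, measure_mono_null (Ioi_subset_Ioi (le_of_lt ht)) hIoib]
        simp
      simp [funH, h1, h2]
    have hxb : x ≤ b := le_csSup hbdd' hx.1
    rw [funH_eq_of_mem μ hint hd hx hbT hxb, hHb]
  · -- unbounded support case
    push_neg at hbdd
    have hseq : ∀ n : ℕ, ∃ y, y ∈ Tset μ δ ∧ max x n < y := by
      intro n
      obtain ⟨y, hyT, hyM⟩ := exists_Tset_gt μ δ (hbdd (max x n))
      exact ⟨y, hyT, hyM⟩
    choose Y hYT hYgt using hseq
    have hYtop : Filter.Tendsto Y Filter.atTop Filter.atTop := by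
      refine Filter.tendsto_atTop_mono (fun n => ?_) tendsto_natCast_atTop_atTop
      exact ((le_max_right x n)).trans (hYgt n).le
    have hconst : ∀ n, funH μ c δ (Y n) = funH μ c δ x := fun n =>
      (funH_eq_of_mem μ hint hd hx (hYT n) ((le_max_left x n).trans (hYgt n).le)).symm
    have h1 : Filter.Tendsto (fun n => funH μ c δ (Y n)) Filter.atTop (nhds 0) :=
      (tendsto_funH_atTop μ hint c δ).comp hYtop
    have h2 : Filter.Tendsto (fun n => funH μ c δ (Y n)) Filter.atTop (nhds (funH μ c δ x)) := by
      simp only [hconst]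
      exact tendsto_const_nhds
    exact tendsto_nhds_unique h2 h1
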